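/- Conserved total angular-type vector for the Hamiltonian N-body system (F.8a): let N ≥ 1, let λ ∈ ℝ and let (a_{nm}), (b_{nm}), (c_{nm}) be real N×N arrays with b_{nm} = b_{mn} and c_{nm} = c_{mn}, and let q_n, p_n : ℝ → ℝ³ (n = 1,…,N) be differentiable functions satisfying q̇_n = Σ_{m=1}^{N} ( a_{nm} q_m + b_{nm} p_m + 4λ [ q_n × ( q_m × p_m ) ] ) and ṗ_n = Σ_{m=1}^{N} ( c_{nm} q_m − a_{mn} p_m + 4λ [ p_n × ( q_m × p_m ) ] ). Then the vector Σ_{m=1}^{N} q_m(t) × p_m(t) is constant in time. -/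

import Mathlib

/-!
Differentiating `J = ∑ₘ qₘ × pₘ` along the flow gives `∑ₙ (q̇ₙ × pₙ + qₙ × ṗₙ)`. The terms linear
in `a`, `b`, `c` cancel in pairs `(n, m) ↔ (m, n)`, by relabelling for `a` and by symmetry of the
coefficient against antisymmetry of `×` for `b` and `c`. By the Leibniz (Jacobi) identity the
cubic terms of the pair `(n, m)` combine to `4λ (qₙ × pₙ) × (qₘ × pₘ)`, so they sum to
`4λ J × J = 0`.
-/

open Matrix

theorem HasDerivAt.crossProduct {𝕜 : Type*} [NontriviallyNormedField 𝕜] [CompleteSpace 𝕜]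
    {u v : 𝕜 → Fin 3 → 𝕜} {u' v' : Fin 3 → 𝕜} {t : 𝕜}
    (hu : HasDerivAt u u' t) (hv : HasDerivAt v v' t) :
    HasDerivAt (fun s => u s ⨯₃ v s) (u' ⨯₃ v t + u t ⨯₃ v') t := by
  simpa [add_comm] using
    (_root_.crossProduct (R := 𝕜)).toContinuousBilinearMap.hasDerivAt_of_bilinear
      (fun _ => hu) (fun _ => hv)

section

variable {R : Type*} [CommRing R] {ι : Type*} [Fintype ι]

theorem cross_cross_add_cross_cross (u v w : Fin 3 → R) :
    (u ⨯₃ w) ⨯₃ v + u ⨯₃ (v ⨯₃ w) = (u ⨯₃ v) ⨯₃ w := by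
  rw [leibniz_cross u v w, ← cross_anticomm (u ⨯₃ w) v]
  abel

theorem sum_sum_smul_cross_eq_zero_of_symm (b : ι → ι → R) (hb : ∀ n m, b n m = b m n)
    (v : ι → Fin 3 → R) : ∑ n, ∑ m, b n m • (v n ⨯₃ v m) = 0 := by
  rw [← Fintype.sum_prod_type']
  refine Finset.sum_ninvolution Prod.swap (fun x => ?_) (fun x hx => ?_)
    (fun _ => Finset.mem_univ _) (fun _ => rfl)
  · rw [Prod.fst_swap, Prod.snd_swap, hb x.2 x.1, ← smul_add, cross_anticomm', smul_zero]
  · rintro h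
    obtain ⟨n, m⟩ := x
    obtain rfl : m = n := (Prod.ext_iff.mp h).1
    simp at hx

/-- The right-hand side of the equation for `q̇ₙ` in (F.8a); `pDot` is that for `ṗₙ`. -/
def qDot (lam : R) (a b : ι → ι → R) (q p : ι → Fin 3 → R) (n : ι) : Fin 3 → R :=
  ∑ m, (a n m • q m + b n m • p m + (4 * lam) • q n ⨯₃ (q m ⨯₃ p m))

def pDot (lam : R) (a c : ι → ι → R) (q p : ι → Fin 3 → R) (n : ι) : Fin 3 → R :=
  ∑ m, (c n m • q m - a m n • p m + (4 * lam) • p n ⨯₃ (q m ⨯₃ p m))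

theorem sum_qDot_cross_add_cross_pDot (lam : R) (a b c : ι → ι → R)
    (hb : ∀ n m, b n m = b m n) (hc : ∀ n m, c n m = c m n) (q p : ι → Fin 3 → R) :
    ∑ n, (qDot lam a b q p n ⨯₃ p n + q n ⨯₃ pDot lam a c q p n) = 0 := by
  have hterm : ∀ n m, (a n m • q m + b n m • p m + (4 * lam) • q n ⨯₃ (q m ⨯₃ p m)) ⨯₃ p n
      + q n ⨯₃ (c n m • q m - a m n • p m + (4 * lam) • p n ⨯₃ (q m ⨯₃ p m))
      = (a n m • (q m ⨯₃ p n) - a m n • (q n ⨯₃ p m))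
        + (c n m • (q n ⨯₃ q m) - b n m • (p n ⨯₃ p m)
          + (4 * lam) • ((q n ⨯₃ p n) ⨯₃ (q m ⨯₃ p m))) := by
    intro n m
    rw [← cross_cross_add_cross_cross, ← cross_anticomm (p m) (p n)]
    simp only [map_add, map_sub, map_smul, LinearMap.add_apply, LinearMap.smul_apply]
    module
  have hswap : ∑ n, ∑ m, a m n • (q n ⨯₃ p m) = ∑ n, ∑ m, a n m • (q m ⨯₃ p n) :=
    Finset.sum_comm
  calc ∑ n, (qDot lam a b q p n ⨯₃ p n + q n ⨯₃ pDot lam a c q p n)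
      = ∑ n, ∑ m, ((a n m • (q m ⨯₃ p n) - a m n • (q n ⨯₃ p m))
        + (c n m • (q n ⨯₃ q m) - b n m • (p n ⨯₃ p m)
          + (4 * lam) • ((q n ⨯₃ p n) ⨯₃ (q m ⨯₃ p m)))) := by
        simp only [qDot, pDot, map_sum, LinearMap.sum_apply, ← Finset.sum_add_distrib, hterm]
    _ = 0 := by
        simp only [Finset.sum_add_distrib, Finset.sum_sub_distrib, hswap, sub_self,
          sum_sum_smul_cross_eq_zero_of_symm _ hb, sum_sum_smul_cross_eq_zero_of_symm _ hc,
          sum_sum_smul_cross_eq_zero_of_symm (fun _ _ => 4 * lam) fun _ _ => rfl, add_zero]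

end

theorem conserved_angular_vector (N : ℕ) (lam : ℝ)
    (a b c : Fin N → Fin N → ℝ)
    (hb : ∀ n m, b n m = b m n) (hc : ∀ n m, c n m = c m n)
    (q p : Fin N → ℝ → (Fin 3 → ℝ))
    (hq : ∀ n t, HasDerivAt (q n)
      (∑ m, (a n m • q m t + b n m • p m t
        + (4 * lam) • crossProduct (q n t) (crossProduct (q m t) (p m t)))) t)
    (hp : ∀ n t, HasDerivAt (p n)
      (∑ m, (c n m • q m t - a m n • p m t
        + (4 * lam) • crossProduct (p n t) (crossProduct (q m t) (p m t)))) t) :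
    ∀ t₁ t₂ : ℝ, ∑ m, crossProduct (q m t₁) (p m t₁)
      = ∑ m, crossProduct (q m t₂) (p m t₂) := by
  have hconst : ∀ t, HasDerivAt (fun s => ∑ m, q m s ⨯₃ p m s) 0 t := fun t =>
    (HasDerivAt.fun_sum fun n _ => (hq n t).crossProduct (hp n t)).congr_deriv
      (sum_qDot_cross_add_cross_pDot lam a b c hb hc (q · t) (p · t))
  exact is_const_of_deriv_eq_zero (fun t => (hconst t).differentiableAt)
    (fun t => (hconst t).deriv)
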